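/- arXiv:1602.00127 — 3 statements merged into one kernel-verified Lean document; each statement's English description precedes it below -/
import Mathlib

section
/- Let A be an essentially small Hom-finite R-linear additive category and M a finitely presented right A-module with projective presentation P_{a1} → P_{a0} → M → 0 induced by a morphism f : a1 → a0 in A. Then Hom_A(M, P_a) = 0 for all objects a of A if and only if f is an epimorphism in A. -/
set_option linter.unusedVariables false

/-!  Common setup: modules over a small R-linear category, finite presentation,
duality, dimensions, d-abelian categories, cluster tilting, etc.  -/

open CategoryTheory CategoryTheory.Limits Opposite

universe u

noncomputable section

namespace DP

variable (R : Type u) [CommRing R]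

/-- An `R`-linear structure on the opposite category. -/
instance oppositeLinear (A : Type u) [SmallCategory A] [Preadditive A]
    [CategoryTheory.Linear R A] : CategoryTheory.Linear R Aᵒᵖ where
  homModule X Y :=
    { smul := fun r f => (r • f.unop).op
      one_smul := fun f => Quiver.Hom.unop_inj (one_smul _ _)
      mul_smul := fun r s f => Quiver.Hom.unop_inj (mul_smul _ _ _)
      smul_zero := fun r => Quiver.Hom.unop_inj (smul_zero _)
      smul_add := fun r f g => Quiver.Hom.unop_inj (smul_add _ _ _)
      add_smul := fun r s f => Quiver.Hom.unop_inj (add_smul _ _ _)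
      zero_smul := fun f => Quiver.Hom.unop_inj (zero_smul _ _) }
  smul_comp X Y Z r f g := Quiver.Hom.unop_inj (CategoryTheory.Linear.comp_smul _ _ _ _ _ _)
  comp_smul X Y Z f r g := Quiver.Hom.unop_inj (CategoryTheory.Linear.smul_comp _ _ _ _ _ _)

variable (A : Type u) [SmallCategory A] [Preadditive A] [CategoryTheory.Linear R A]

/-- The category of (not necessarily finitely presented) right `A`-modules,
i.e. contravariant `R`-linear functors `A ⥤ Module R`. -/
abbrev Mdl : Type (u + 1) := Aᵒᵖ ⥤ ModuleCat.{u} R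

/-- The representable (finitely generated projective) module `P_a = A(-,a)`. -/
abbrev Pr (a : A) : Mdl R A := (linearYoneda R A).obj a

/-- The `A`-dual representable `P_a^* = A(a,-)`, a projective `Aᵒᵖ`-module. -/
abbrev PrS (a : A) : Mdl R Aᵒᵖ := (linearYoneda R Aᵒᵖ).obj (op a)

/-- The map `A(b,-) ⟶ A(a,-)` of `Aᵒᵖ`-modules induced by `f : a ⟶ b`. -/
abbrev dualMap {a b : A} (f : a ⟶ b) : PrS R A b ⟶ PrS R A a :=
  (linearYoneda R Aᵒᵖ).map f.op

variable {R A}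

/-- Pointwise exactness of a pair of composable morphisms of `A`-modules. -/
def ExactAt {L M N : Mdl R A} (f : L ⟶ M) (g : M ⟶ N) : Prop :=
  ∀ x : Aᵒᵖ, Function.Exact (f.app x) (g.app x)

/-- Pointwise injectivity (= being a monomorphism) of a morphism of `A`-modules. -/
def MonoPt {M N : Mdl R A} (f : M ⟶ N) : Prop :=
  ∀ x : Aᵒᵖ, Function.Injective (f.app x)

/-- Pointwise surjectivity (= being an epimorphism) of a morphism of `A`-modules. -/
def EpiPt {M N : Mdl R A} (f : M ⟶ N) : Prop :=
  ∀ x : Aᵒᵖ, Function.Surjective (f.app x)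

variable (R A)

/-- A module is finitely presented if it is the cokernel of a map of representables. -/
def FP (M : Mdl R A) : Prop :=
  ∃ (a₁ a₀ : A) (f : a₁ ⟶ a₀) (p : Pr R A a₀ ⟶ M),
    EpiPt p ∧ ExactAt ((linearYoneda R A).map f) p

/-- Finitely generated projective modules: direct summands of representables. -/
def FGProj (Q : Mdl R A) : Prop :=
  ∃ (a : A) (s : Q ⟶ Pr R A a) (r : Pr R A a ⟶ Q), s ≫ r = 𝟙 Q

/-- Injective objects of the category `mod A` of finitely presented `A`-modules. -/
def FPInjective (I : Mdl R A) : Prop :=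
  FP R A I ∧ ∀ (X Y : Mdl R A), FP R A X → FP R A Y → ∀ (i : X ⟶ Y), MonoPt i →
    ∀ g : X ⟶ I, ∃ h : Y ⟶ I, i ≫ h = g

/-- Hom-finiteness of an `R`-linear category. -/
def HomFinite : Prop := ∀ a b : A, Module.Finite R (a ⟶ b)

/-- The `E`-dual of an `A`-module, an `Aᵒᵖ`-module; for `E` the injective envelope of
`R/rad R` this is the duality `D` of Auslander–Reiten. -/
def DM (E : ModuleCat.{u} R) (M : Mdl R A) : Mdl R Aᵒᵖ :=
  M.op ⋙ (linearYoneda R (ModuleCat.{u} R)).obj E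

/-- The `E`-dual of an `Aᵒᵖ`-module, viewed as an `A`-module. -/
def DM2 (E : ModuleCat.{u} R) (N : Mdl R Aᵒᵖ) : Mdl R A :=
  (opOp A).op ⋙ N.op ⋙ (linearYoneda R (ModuleCat.{u} R)).obj E

/-- `E` is a finitely generated injective cogenerator; for `R` artinian the injective
envelope of `R/rad R` is such a module, and defines Matlis duality. -/
def GoodCogenerator (E : ModuleCat.{u} R) : Prop :=
  Injective E ∧ Module.Finite R E ∧
    ∀ (M : ModuleCat.{u} R) (x : M), x ≠ 0 → ∃ f : M ⟶ E, f x ≠ 0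

/-- A dualizing `R`-variety: an essentially small Hom-finite additive idempotent complete
`R`-category such that the duality `D = Hom_R(-,E)` exchanges finitely presented `A`-modules
and finitely presented `Aᵒᵖ`-modules. -/
structure IsDualizingVariety (E : ModuleCat.{u} R) : Prop where
  homFinite : HomFinite R A
  hasBiproducts : HasFiniteBiproducts A
  idemSplit : IsIdempotentComplete A
  cogen : GoodCogenerator R E
  dual_fp : ∀ M : Mdl R A, FP R A M → FP R Aᵒᵖ (DM R A E M)
  dual_fp_op : ∀ N : Mdl R Aᵒᵖ, FP R Aᵒᵖ N → FP R (Aᵒᵖ)ᵒᵖ (DM R Aᵒᵖ E N)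

/-- `Q ⟶ ⋯ ⟶ Q 0 ⟶ M ⟶ 0` is a resolution of `M` by finitely generated projectives. -/
def IsFGProjResolution (M : Mdl R A) (Q : ℕ → Mdl R A)
    (g : ∀ i, Q (i + 1) ⟶ Q i) (ε : Q 0 ⟶ M) : Prop :=
  (∀ i, FGProj R A (Q i)) ∧ EpiPt ε ∧ ExactAt (g 0) ε ∧ ∀ i, ExactAt (g (i + 1)) (g i)

/-- A resolution of `M` by representable modules `P_{a i}`. -/
def IsRepResolution (M : Mdl R A) (a : ℕ → A) (g : ∀ i, a (i + 1) ⟶ a i)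
    (ε : Pr R A (a 0) ⟶ M) : Prop :=
  (∀ i, g (i + 1) ≫ g i = 0) ∧ EpiPt ε ∧ ExactAt ((linearYoneda R A).map (g 0)) ε ∧
    ∀ i, ExactAt ((linearYoneda R A).map (g (i + 1))) ((linearYoneda R A).map (g i))

/-- Projective dimension at most `n`. -/
def PdimLE (M : Mdl R A) (n : ℕ) : Prop :=
  ∃ (Q : ℕ → Mdl R A) (g : ∀ i, Q (i + 1) ⟶ Q i) (ε : Q 0 ⟶ M),
    IsFGProjResolution R A M Q g ε ∧ ∀ i, n < i → IsZero (Q i)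

/-- Global dimension at most `n`: every finitely presented module has `pd ≤ n`. -/
def GldimLE (n : ℕ) : Prop := ∀ M : Mdl R A, FP R A M → PdimLE R A M n

/-- `M` lies in `⊥(A_A)`, i.e. `Hom_A(M, P) = 0` for every representable `P`. -/
def InPerpProj (M : Mdl R A) : Prop := ∀ (a : A) (f : M ⟶ Pr R A a), f = 0

section Ext

variable [HasExt.{u} (Mdl R A)]

/-- Vanishing of `Ext^k(M,X)` for all `1 ≤ k ≤ d`. -/
def ExtVanishLE (M X : Mdl R A) (d : ℕ) : Prop :=
  ∀ k, 1 ≤ k → k ≤ d → Subsingleton (Abelian.Ext M X k)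

/-- `M` lies in `⊥_d (A_A)`: `Ext^k(M,P) = 0` for `1 ≤ k ≤ d` and all representables. -/
def InPerpdProj (d : ℕ) (M : Mdl R A) : Prop := ∀ a : A, ExtVanishLE R A M (Pr R A a) d

end Ext

/-- Dominant dimension at least `d + 1`: each representable has an injective coresolution
whose first `d + 1` terms are projective. -/
def DomdimGE (d : ℕ) : Prop := ∀ a : A,
  ∃ (I : ℕ → Mdl R A) (η : Pr R A a ⟶ I 0) (f : ∀ i, I i ⟶ I (i + 1)),
    MonoPt η ∧ ExactAt η (f 0) ∧ (∀ i, ExactAt (f i) (f (i + 1))) ∧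
    (∀ i, FPInjective R A (I i)) ∧ ∀ i ≤ d, FGProj R A (I i)

/-- A `d`-Auslander pair of dimensions: `gldim A ≤ d + 1 ≤ domdim A`. -/
def IsDAuslander (d : ℕ) : Prop := GldimLE R A (d + 1) ∧ DomdimGE R A d

/-- An essential monomorphism (with test objects in `mod A`). -/
def IsEssentialMono {M I : Mdl R A} (η : M ⟶ I) : Prop :=
  MonoPt η ∧ ∀ Y : Mdl R A, FP R A Y → ∀ g : I ⟶ Y, MonoPt (η ≫ g) → MonoPt g

/-- An injective envelope in `mod A`. -/
def IsInjEnvelope {M I : Mdl R A} (η : M ⟶ I) : Prop :=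
  FPInjective R A I ∧ IsEssentialMono R A η

/-- A projective cover in `mod A`. -/
def IsProjCover {Q N : Mdl R A} (p : Q ⟶ N) : Prop :=
  FGProj R A Q ∧ EpiPt p ∧ ∀ Y : Mdl R A, FP R A Y → ∀ g : Y ⟶ Q, EpiPt (g ≫ p) → EpiPt g

/-- A minimal injective coresolution `0 ⟶ M ⟶ I 0 ⟶ I 1 ⟶ ⋯`. -/
def MinInjCores (M : Mdl R A) (I : ℕ → Mdl R A) (η : M ⟶ I 0)
    (f : ∀ i, I i ⟶ I (i + 1)) : Prop :=
  MonoPt η ∧ ExactAt η (f 0) ∧ (∀ i, ExactAt (f i) (f (i + 1))) ∧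
    (∀ i, FPInjective R A (I i)) ∧ IsEssentialMono R A η ∧
    ∀ i, IsEssentialMono R A (kernel.ι (f (i + 1)))

/-- `W` is a (first, minimal) syzygy of `M`. -/
def IsSyzygyOf (W M : Mdl R A) : Prop :=
  ∃ (Q : Mdl R A) (p : Q ⟶ M) (ι : W ⟶ Q), IsProjCover R A p ∧ MonoPt ι ∧ ExactAt ι p

/-- `W` is an `n`-th (minimal) syzygy of `M`. -/
def IsNthSyzygyOf (W M : Mdl R A) (n : ℕ) : Prop :=
  ∃ Y : ℕ → Mdl R A, Nonempty (Y 0 ≅ M) ∧ Nonempty (Y n ≅ W) ∧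
    ∀ i < n, IsSyzygyOf R A (Y (i + 1)) (Y i)

/-- `W` is a (first, minimal) cosyzygy of `M`. -/
def IsCosyzygyOf (W M : Mdl R A) : Prop :=
  ∃ (I : Mdl R A) (η : M ⟶ I) (π : I ⟶ W), IsInjEnvelope R A η ∧ EpiPt π ∧ ExactAt η π

/-- `W` is an `n`-th (minimal) cosyzygy of `M`. -/
def IsNthCosyzygyOf (W M : Mdl R A) (n : ℕ) : Prop :=
  ∃ Y : ℕ → Mdl R A, Nonempty (Y 0 ≅ M) ∧ Nonempty (Y n ≅ W) ∧
    ∀ i < n, IsCosyzygyOf R A (Y (i + 1)) (Y i)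

/-- `M` is a first syzygy, i.e. the kernel of a projective cover in `mod A`. -/
def InOmega (M : Mdl R A) : Prop :=
  ∃ (N Q : Mdl R A) (p : Q ⟶ N) (ι : M ⟶ Q),
    FP R A N ∧ IsProjCover R A p ∧ MonoPt ι ∧ ExactAt ι p

/-- Right approximations with respect to a subcategory (given by a predicate). -/
def ContravariantlyFinite (P : Mdl R A → Prop) : Prop :=
  ∀ M : Mdl R A, FP R A M → ∃ (B : Mdl R A) (f : B ⟶ M), P B ∧
    ∀ B' : Mdl R A, P B' → ∀ g : B' ⟶ M, ∃ h : B' ⟶ B, h ≫ f = g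

/-- Left approximations with respect to a subcategory (given by a predicate). -/
def CovariantlyFinite (P : Mdl R A → Prop) : Prop :=
  ∀ M : Mdl R A, FP R A M → ∃ (B : Mdl R A) (f : M ⟶ B), P B ∧
    ∀ B' : Mdl R A, P B' → ∀ g : M ⟶ B', ∃ h : B ⟶ B', f ≫ h = g

/-- Functorially finite subcategories of `mod A`. -/
def FunctoriallyFinite (P : Mdl R A → Prop) : Prop :=
  ContravariantlyFinite R A P ∧ CovariantlyFinite R A P

section DCT

variable [HasExt.{u} (Mdl R A)]

/-- `X ∈ ⊥_{d-1} P`. -/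
def InLeftPerp (P : Mdl R A → Prop) (d : ℕ) (X : Mdl R A) : Prop :=
  FP R A X ∧ ∀ M, P M → ∀ k, 1 ≤ k → k ≤ d - 1 → Subsingleton (Abelian.Ext X M k)

/-- `X ∈ P^{⊥_{d-1}}`. -/
def InRightPerp (P : Mdl R A → Prop) (d : ℕ) (X : Mdl R A) : Prop :=
  FP R A X ∧ ∀ M, P M → ∀ k, 1 ≤ k → k ≤ d - 1 → Subsingleton (Abelian.Ext M X k)

/-- `P` is a `d`-cluster-tilting subcategory of `mod A`. -/
def IsDCT (P : Mdl R A → Prop) (d : ℕ) : Prop :=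
  (∀ M, P M → FP R A M) ∧ FunctoriallyFinite R A P ∧
    (∀ X, P X ↔ InLeftPerp R A P d X) ∧ (∀ X, P X ↔ InRightPerp R A P d X)

end DCT

/-- `W` is the homology of `f : L ⟶ M`, `g : M ⟶ N` at `M` (in a module category). -/
def IsModHomologyOf {L M N : ModuleCat.{u} R} (f : L ⟶ M) (g : M ⟶ N)
    (W : ModuleCat.{u} R) : Prop :=
  ∃ (w : f ≫ g = 0) (π : kernel g ⟶ W),
    Function.Surjective π ∧ Function.Exact (kernel.lift g f w) π

/-- Precomposition `Hom(Y,W) ⟶ Hom(X,W)` as a morphism of `R`-modules. -/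
def preComp {X Y : Mdl R A} (f : X ⟶ Y) (W : Mdl R A) :
    ModuleCat.of R (Y ⟶ W) ⟶ ModuleCat.of R (X ⟶ W) :=
  ModuleCat.ofHom (CategoryTheory.Linear.leftComp R W f)

/-- Simple objects of `mod A`. -/
def IsSimpleMod (S : Mdl R A) : Prop :=
  FP R A S ∧ ¬ IsZero S ∧
    ∀ (N : Mdl R A) (ι : N ⟶ S), MonoPt ι → IsZero N ∨ EpiPt ι

/-- Chains `⋯ ⟶ X 2 ⟶ X 1 ⟶ X 0` in a category. -/
structure NChain (A : Type u) [SmallCategory A] where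
  X : ℕ → A
  f : ∀ i, X (i + 1) ⟶ X i

variable {A}

/-- The sequence `0 ⟶ X (d+1) ⟶ ⋯ ⟶ X 0` is left `d`-exact: it becomes exact
under every `A(x,-)`. -/
def NChain.LeftDExact (c : NChain A) (d : ℕ) : Prop :=
  ∀ x : A, (Function.Injective fun g : x ⟶ c.X (d + 1) => g ≫ c.f d) ∧
    ∀ i < d, Function.Exact (fun g : x ⟶ c.X (i + 2) => g ≫ c.f (i + 1))
      (fun g : x ⟶ c.X (i + 1) => g ≫ c.f i)

/-- The sequence `X (d+1) ⟶ ⋯ ⟶ X 0 ⟶ 0` is right `d`-exact: it becomes exact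
under every `A(-,x)`. -/
def NChain.RightDExact (c : NChain A) (d : ℕ) : Prop :=
  ∀ x : A, (Function.Injective fun g : c.X 0 ⟶ x => c.f 0 ≫ g) ∧
    ∀ i < d, Function.Exact (fun g : c.X i ⟶ x => c.f i ≫ g)
      (fun g : c.X (i + 1) ⟶ x => c.f (i + 1) ≫ g)

/-- A `d`-exact sequence `0 ⟶ X (d+1) ⟶ ⋯ ⟶ X 0 ⟶ 0`. -/
def NChain.DExact (c : NChain A) (d : ℕ) : Prop :=
  c.LeftDExact d ∧ c.RightDExact d

variable (A)

/-- A `d`-abelian category (Jasso): idempotent complete additive category with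
`d`-kernels, `d`-cokernels, and `d`-exact sequences for epis and monos. -/
structure IsDAbelian (d : ℕ) : Prop where
  idemSplit : IsIdempotentComplete A
  a1 : ∀ ⦃a₁ a₀ : A⦄ (f : a₁ ⟶ a₀), ∃ (c : NChain A) (e₁ : c.X 1 ≅ a₁) (e₀ : c.X 0 ≅ a₀),
    c.f 0 = e₁.hom ≫ f ≫ e₀.inv ∧ c.LeftDExact d
  a1op : ∀ ⦃a₁ a₀ : A⦄ (f : a₁ ⟶ a₀), ∃ (c : NChain A) (e₁ : c.X (d + 1) ≅ a₁)
    (e₀ : c.X d ≅ a₀), c.f d = e₁.hom ≫ f ≫ e₀.inv ∧ c.RightDExact d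
  a2 : ∀ ⦃a₁ a₀ : A⦄ (f : a₁ ⟶ a₀), Epi f → ∃ (c : NChain A) (e₁ : c.X 1 ≅ a₁)
    (e₀ : c.X 0 ≅ a₀), c.f 0 = e₁.hom ≫ f ≫ e₀.inv ∧ c.DExact d
  a2op : ∀ ⦃a₁ a₀ : A⦄ (f : a₁ ⟶ a₀), Mono f → ∃ (c : NChain A) (e₁ : c.X (d + 1) ≅ a₁)
    (e₀ : c.X d ≅ a₀), c.f d = e₁.hom ≫ f ≫ e₀.inv ∧ c.DExact d

/-- The `A`-dual module `M^* = Hom_A(M,-)|_A`, an `Aᵒᵖ`-module. -/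
def starMod (R : Type u) [CommRing R] (A : Type u) [SmallCategory A] [Preadditive A]
    [CategoryTheory.Linear R A] (M : Mdl R A) : Mdl R Aᵒᵖ :=
  unopUnop A ⋙ linearYoneda R A ⋙ (linearCoyoneda R (Mdl R A)).obj (Opposite.op M)

/-- The double `A`-dual module `M^{**}`, an `A`-module. -/
def doubleStar (R : Type u) [CommRing R] (A : Type u) [SmallCategory A] [Preadditive A]
    [CategoryTheory.Linear R A] (M : Mdl R A) : Mdl R A :=
  linearYoneda R Aᵒᵖ ⋙ (linearCoyoneda R (Mdl R Aᵒᵖ)).obj (Opposite.op (starMod R A M))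


instance mdlHasFiniteBiproducts (A : Type u) [SmallCategory A] [Preadditive A]
    [CategoryTheory.Linear R A] : HasFiniteBiproducts (Mdl R A) :=
  Limits.HasFiniteBiproducts.of_hasFiniteCoproducts

end DP

/-!
Since `P_{a₁} → P_{a₀} → M → 0` is a cokernel sequence and the Yoneda embedding is fully
faithful, morphisms `M ⟶ P_a` correspond to morphisms `g : a₀ ⟶ a` with `f ≫ g = 0`.
Hence they all vanish exactly when `f` is left-cancellable against zero, i.e. epi.
-/

namespace DP

section Presentation

variable {R : Type u} [CommRing R] {A : Type u} [SmallCategory A]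

theorem ExactAt.comp_eq_zero {L M N : Mdl R A} {f : L ⟶ M} {g : M ⟶ N} (h : ExactAt f g) :
    f ≫ g = 0 := by
  ext x m
  exact (h x).apply_apply_eq_zero m

theorem ExactAt.exact {L M N : Mdl R A} {f : L ⟶ M} {g : M ⟶ N} (h : ExactAt f g) :
    (ShortComplex.mk f g h.comp_eq_zero).Exact := by
  rw [ShortComplex.exact_iff_isZero_homology, Functor.isZero_iff]
  intro x
  let S := ShortComplex.mk f g h.comp_eq_zero
  let evalX := (evaluation Aᵒᵖ (ModuleCat.{u} R)).obj x
  have hx : (S.map evalX).Exact := by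
    rw [ShortComplex.moduleCat_exact_iff]
    exact fun m hm => ((h x) m).mp hm
  exact (S.map evalX).exact_iff_isZero_homology.mp hx |>.of_iso (S.mapHomologyIso evalX).symm

theorem EpiPt.epi {M N : Mdl R A} {p : M ⟶ N} (hp : EpiPt p) : Epi p :=
  have : ∀ x, Epi (p.app x) := fun x => (ModuleCat.epi_iff_surjective _).mpr (hp x)
  NatTrans.epi_of_epi_app p

variable [Preadditive A] [CategoryTheory.Linear R A]
  {M : Mdl R A} {a₁ a₀ : A} {f : a₁ ⟶ a₀} {p : Pr R A a₀ ⟶ M}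

theorem exists_comp_eq_map_of_exactAt (hex : ExactAt ((linearYoneda R A).map f) p) {a : A}
    (u : M ⟶ Pr R A a) : ∃ g : a₀ ⟶ a, p ≫ u = (linearYoneda R A).map g ∧ f ≫ g = 0 := by
  obtain ⟨g, hg⟩ := (linearYoneda R A).map_surjective (p ≫ u)
  refine ⟨g, hg.symm, (linearYoneda R A).map_injective ?_⟩
  rw [Functor.map_comp, hg, ← Category.assoc, hex.comp_eq_zero, zero_comp, Functor.map_zero]

theorem exists_comp_eq_map_of_comp_eq_zero (hp : EpiPt p)
    (hex : ExactAt ((linearYoneda R A).map f) p) {a : A} {g : a₀ ⟶ a} (hg : f ≫ g = 0) :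
    ∃ u : M ⟶ Pr R A a, p ≫ u = (linearYoneda R A).map g :=
  have := hp.epi
  hex.exact.desc' ((linearYoneda R A).map g)
    (by rw [← Functor.map_comp, hg, Functor.map_zero])

end Presentation

variable (R : Type u) [CommRing R] [IsArtinianRing R]

theorem stmt0 (A : Type u) [SmallCategory A] [Preadditive A] [CategoryTheory.Linear R A]
    (M : Mdl R A) (a₁ a₀ : A) (f : a₁ ⟶ a₀) (p : Pr R A a₀ ⟶ M)
    (hp : EpiPt p) (hex : ExactAt ((linearYoneda R A).map f) p) :
    (∀ (a : A) (u : M ⟶ Pr R A a), u = 0) ↔ Epi f := by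
  constructor
  · intro hM
    rw [Preadditive.epi_iff_cancel_zero]
    intro a g hg
    obtain ⟨u, hu⟩ := exists_comp_eq_map_of_comp_eq_zero hp hex hg
    rw [hM a u, comp_zero] at hu
    exact (linearYoneda R A).map_injective (by rw [← hu, Functor.map_zero])
  · intro hf a u
    obtain ⟨g, hpu, hfg⟩ := exists_comp_eq_map_of_exactAt hex u
    have := hp.epi
    rw [← cancel_epi p, hpu, zero_of_epi_comp f hfg, Functor.map_zero, comp_zero]

end DP
end
end

section
/- Let A be a d-abelian category. Then the global dimension of A (as a ring-like additive category, i.e. the supremum of projective dimensions of finitely presented A-modules) is at most d+1, and likewise gldim A^op ≤ d+1. -/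
set_option linter.unusedVariables false

/-!  Common setup: modules over a small R-linear category, finite presentation,
duality, dimensions, d-abelian categories, cluster tilting, etc.  -/

open CategoryTheory CategoryTheory.Limits Opposite

universe u

noncomputable section

/-!
A finitely presented module `M = Coker A(-, f)` is resolved by the Yoneda image of a `d`-kernel
`0 ⟶ X (d + 1) ⟶ ⋯ ⟶ X 1 ⟶ X 0` of `f`: left `d`-exactness says precisely that
`0 ⟶ A(-, X (d + 1)) ⟶ ⋯ ⟶ A(-, X 0) ⟶ M ⟶ 0` is exact, so `pd M ≤ d + 1`. Over `Aᵒᵖ` the same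
argument applies, because a `d`-cokernel of `f` in `A`, read backwards, is a `d`-kernel of `f`
in `Aᵒᵖ`.
-/

namespace DP

open ZeroObject

section Modules

variable {R : Type u} [CommRing R] {A : Type u} [SmallCategory A]

lemma monoPt_iff_mono {M N : Mdl R A} (f : M ⟶ N) : MonoPt f ↔ Mono f := by
  simp only [MonoPt, NatTrans.mono_iff_mono_app, ModuleCat.mono_iff_injective]

lemma epiPt_iff_epi {M N : Mdl R A} (f : M ⟶ N) : EpiPt f ↔ Epi f := by
  simp only [EpiPt, NatTrans.epi_iff_epi_app, ModuleCat.epi_iff_surjective]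

lemma exactAt_iff_of_iso {L M N L' M' N' : Mdl R A} {f : L ⟶ M} {g : M ⟶ N}
    {f' : L' ⟶ M'} {g' : M' ⟶ N'} (eL : L ≅ L') (eM : M ≅ M') (eN : N ≅ N')
    (comm₁ : f ≫ eM.hom = eL.hom ≫ f') (comm₂ : g ≫ eN.hom = eM.hom ≫ g') :
    ExactAt f' g' ↔ ExactAt f g :=
  forall_congr' fun x => Function.Exact.iff_of_ladder_linearEquiv
    (e₁ := (eL.app x).toLinearEquiv) (e₂ := (eM.app x).toLinearEquiv)
    (e₃ := (eN.app x).toLinearEquiv)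
    (LinearMap.ext fun y => congr((ModuleCat.Hom.hom (NatTrans.app $comm₁.symm x)) y))
    (LinearMap.ext fun y => congr((ModuleCat.Hom.hom (NatTrans.app $comm₂.symm x)) y))

lemma exactAt_of_isZero_middle {L M N : Mdl R A} (f : L ⟶ M) (g : M ⟶ N) (hM : IsZero M) :
    ExactAt f g := fun x y => by
  have := ModuleCat.isZero_iff_subsingleton.mp (hM.obj x)
  simpa [Subsingleton.elim y 0] using ⟨0, map_zero _⟩

lemma exactAt_of_isZero_left {L M N : Mdl R A} (f : L ⟶ M) (g : M ⟶ N) (hL : IsZero L)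
    (hg : MonoPt g) : ExactAt f g := fun x y => by
  have := ModuleCat.isZero_iff_subsingleton.mp (hL.obj x)
  refine ⟨fun hy => ⟨0, ?_⟩, fun ⟨z, hz⟩ => ?_⟩
  · exact hg x (by simpa using hy.symm)
  · simp [← hz, Subsingleton.elim z 0]

def truncObj (P : ℕ → Mdl R A) (n i : ℕ) : Mdl R A := if i ≤ n then P i else 0

lemma truncObj_eq (P : ℕ → Mdl R A) {n i : ℕ} (h : i ≤ n) : truncObj P n i = P i := if_pos h

lemma isZero_truncObj (P : ℕ → Mdl R A) {n i : ℕ} (h : n < i) : IsZero (truncObj P n i) := by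
  rw [truncObj, if_neg (by omega)]
  exact isZero_zero _

def truncHom (P : ℕ → Mdl R A) (g : ∀ i, P (i + 1) ⟶ P i) (n i : ℕ) :
    truncObj P n (i + 1) ⟶ truncObj P n i :=
  if h : i + 1 ≤ n then
    eqToHom (truncObj_eq P h) ≫ g i ≫ eqToHom (truncObj_eq P (by omega)).symm
  else 0

lemma truncHom_eq (P : ℕ → Mdl R A) (g : ∀ i, P (i + 1) ⟶ P i) {n i : ℕ} (h : i + 1 ≤ n) :
    truncHom P g n i =
      eqToHom (truncObj_eq P h) ≫ g i ≫ eqToHom (truncObj_eq P (by omega)).symm :=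
  dif_pos h

lemma exactAt_truncHom (P : ℕ → Mdl R A) (g : ∀ i, P (i + 1) ⟶ P i) {n i : ℕ}
    (h : i + 2 ≤ n) (hex : ExactAt (g (i + 1)) (g i)) :
    ExactAt (truncHom P g n (i + 1)) (truncHom P g n i) := by
  refine (exactAt_iff_of_iso (eqToIso (truncObj_eq P h).symm)
    (eqToIso (truncObj_eq P (by omega)).symm) (eqToIso (truncObj_eq P (by omega)).symm)
    ?_ ?_).2 hex <;>
    simp [truncHom_eq P g h, truncHom_eq P g (show i + 1 ≤ n by omega)]

variable [Preadditive A] [CategoryTheory.Linear R A]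

lemma fgProj_of_isZero (a : A) {Q : Mdl R A} (hQ : IsZero Q) : FGProj R A Q :=
  ⟨a, 0, 0, hQ.eq_of_src _ _⟩

lemma fgProj_pr (a : A) : FGProj R A (Pr R A a) :=
  ⟨a, 𝟙 _, 𝟙 _, Category.id_comp _⟩

lemma FGProj.of_iso {P Q : Mdl R A} (e : P ≅ Q) (hP : FGProj R A P) : FGProj R A Q := by
  obtain ⟨a, s, r, hsr⟩ := hP
  exact ⟨a, e.inv ≫ s, r ≫ e.hom, by simp [reassoc_of% hsr]⟩

theorem pdimLE_of_finite_resolution {M : Mdl R A} {n : ℕ} (P : ℕ → Mdl R A)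
    (g : ∀ i, P (i + 1) ⟶ P i) (ε : P 0 ⟶ M) (hP : ∀ i, FGProj R A (P i)) (hε : EpiPt ε)
    (h₀ : ExactAt (g 0) ε) (hex : ∀ i < n, ExactAt (g (i + 1)) (g i)) (hmono : MonoPt (g n)) :
    PdimLE R A M (n + 1) := by
  have e₀ : truncObj P (n + 1) 0 = P 0 := truncObj_eq P (Nat.zero_le _)
  refine ⟨truncObj P (n + 1), truncHom P g (n + 1), eqToHom e₀ ≫ ε,
    ⟨fun i => ?_, ?_, ?_, fun i => ?_⟩, fun i hi => isZero_truncObj P hi⟩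
  · by_cases hi : i ≤ n + 1
    · exact (hP i).of_iso (eqToIso (truncObj_eq P hi).symm)
    · obtain ⟨a, -⟩ := hP 0
      exact fgProj_of_isZero a (isZero_truncObj P (by omega))
  · rw [epiPt_iff_epi] at hε ⊢
    infer_instance
  · refine (exactAt_iff_of_iso (eqToIso (truncObj_eq P (by omega)).symm) (eqToIso e₀.symm)
      (Iso.refl M) ?_ ?_).2 h₀ <;> simp [truncHom_eq P g (show 0 + 1 ≤ n + 1 by omega)]
  · rcases lt_trichotomy i n with hi | rfl | hi
    · exact exactAt_truncHom P g (by omega) (hex i hi)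
    · refine exactAt_of_isZero_left _ _ (isZero_truncObj P (by omega)) ?_
      rw [monoPt_iff_mono] at hmono
      rw [truncHom_eq P g le_rfl, monoPt_iff_mono]
      infer_instance
    · exact exactAt_of_isZero_middle _ _ (isZero_truncObj P (by omega))

end Modules

section Chains

variable {A : Type u} [SmallCategory A]

lemma injective_comp_op_iff {x : Aᵒᵖ} {a b : A} (u : b ⟶ a) :
    (Function.Injective fun g : x ⟶ op a => g ≫ u.op) ↔
      Function.Injective fun g : a ⟶ x.unop => u ≫ g :=
  ⟨fun h _ _ hg => Quiver.Hom.op_inj (h (congrArg Quiver.Hom.op hg)),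
    fun h _ _ hg => Quiver.Hom.unop_inj (h (congrArg Quiver.Hom.unop hg))⟩

variable [Preadditive A]

def opHomAddEquiv (x : Aᵒᵖ) (a : A) : (x ⟶ op a) ≃+ (a ⟶ x.unop) :=
  AddEquiv.mk' (opEquiv x (op a)) fun _ _ => rfl

lemma exact_comp_op_iff {x : Aᵒᵖ} {a b c : A} (u : b ⟶ a) (v : c ⟶ b) :
    Function.Exact (fun g : x ⟶ op a => g ≫ u.op) (fun g : x ⟶ op b => g ≫ v.op) ↔
      Function.Exact (fun g : a ⟶ x.unop => u ≫ g) (fun g : b ⟶ x.unop => v ≫ g) :=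
  (Function.Exact.iff_of_ladder_addEquiv (opHomAddEquiv x a) (opHomAddEquiv x b)
    (opHomAddEquiv x c) (f₁₂ := Preadditive.rightComp _ u.op)
    (f₂₃ := Preadditive.rightComp _ v.op) (g₁₂ := Preadditive.leftComp _ u)
    (g₂₃ := Preadditive.leftComp _ v) rfl rfl).symm

variable (A) in
/-- Axiom (A1). -/
def HasDKernels (d : ℕ) : Prop :=
  ∀ ⦃a₁ a₀ : A⦄ (f : a₁ ⟶ a₀), ∃ (c : NChain A) (e₁ : c.X 1 ≅ a₁) (e₀ : c.X 0 ≅ a₀),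
    c.f 0 = e₁.hom ≫ f ≫ e₀.inv ∧ c.LeftDExact d

variable (A) in
/-- Axiom (A1)ᵒᵖ. -/
def HasDCokernels (d : ℕ) : Prop :=
  ∀ ⦃a₁ a₀ : A⦄ (f : a₁ ⟶ a₀), ∃ (c : NChain A) (e₁ : c.X (d + 1) ≅ a₁)
    (e₀ : c.X d ≅ a₀), c.f d = e₁.hom ≫ f ≫ e₀.inv ∧ c.RightDExact d

/-- Indexing an arrow by both of its ends lets index arithmetic be discharged by `subst`. -/
def NChain.arrow (c : NChain A) (k j : ℕ) : c.X k ⟶ c.X j :=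
  if h : k = j + 1 then eqToHom (congrArg c.X h) ≫ c.f j else 0

@[simp]
lemma NChain.arrow_succ (c : NChain A) (j : ℕ) : c.arrow (j + 1) j = c.f j := by
  simp [NChain.arrow]

/-- The chain `op (X 0) ⟶ ⋯ ⟶ op (X (n + 1))` of `Aᵒᵖ`; because of truncated subtraction only
its terms of index `≤ n + 1` are meaningful. -/
def NChain.reverse (c : NChain A) (n : ℕ) : NChain Aᵒᵖ where
  X i := op (c.X (n + 1 - i))
  f i := (c.arrow (n + 1 - i) (n + 1 - (i + 1))).op

lemma NChain.RightDExact.injective_arrow {c : NChain A} {n : ℕ} (hc : c.RightDExact n)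
    {k j : ℕ} (hk : k = 1) (hj : j = 0) (x : A) :
    Function.Injective fun g : c.X j ⟶ x => c.arrow k j ≫ g := by
  subst hk hj
  simpa using (hc x).1

lemma NChain.RightDExact.exact_arrow {c : NChain A} {n : ℕ} (hc : c.RightDExact n)
    {l k j : ℕ} (hl : l = k + 1) (hk : k = j + 1) (hj : j < n) (x : A) :
    Function.Exact (fun g : c.X j ⟶ x => c.arrow k j ≫ g)
      (fun g : c.X k ⟶ x => c.arrow l k ≫ g) := by
  subst hl hk
  simpa using (hc x).2 j hj

lemma NChain.RightDExact.leftDExact_reverse {c : NChain A} {n : ℕ} (hc : c.RightDExact n) :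
    (c.reverse n).LeftDExact n := fun x =>
  ⟨(injective_comp_op_iff _).2 (hc.injective_arrow (by omega) (by omega) x.unop),
    fun i hi => (exact_comp_op_iff _ _).2
      (hc.exact_arrow (by omega) (by omega) (show n + 1 - (i + 2) < n by omega) x.unop)⟩

lemma HasDCokernels.op {d : ℕ} (h : HasDCokernels A d) : HasDKernels Aᵒᵖ d := by
  intro a₁ a₀ f
  obtain ⟨c, e₁, e₀, hf, hc⟩ := h f.unop
  refine ⟨c.reverse d, e₀.op.symm, e₁.op.symm, ?_, hc.leftDExact_reverse⟩
  simpa [NChain.reverse] using congrArg Quiver.Hom.op hf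

end Chains

section Yoneda

variable {R : Type u} [CommRing R] {B : Type u} [SmallCategory B] [Preadditive B]
  [CategoryTheory.Linear R B]

lemma exactAt_linearYoneda_map {a b c : B} {u : a ⟶ b} {v : b ⟶ c}
    (h : ∀ x : B, Function.Exact (fun g : x ⟶ a => g ≫ u) (fun g : x ⟶ b => g ≫ v)) :
    ExactAt ((linearYoneda R B).map u) ((linearYoneda R B).map v) :=
  fun x => h x.unop

lemma monoPt_linearYoneda_map {a b : B} {u : a ⟶ b}
    (h : ∀ x : B, Function.Injective fun g : x ⟶ a => g ≫ u) :
    MonoPt ((linearYoneda R B).map u) :=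
  fun x => h x.unop

theorem gldimLE_of_hasDKernels {d : ℕ} (h : HasDKernels B d) : GldimLE R B (d + 1) := by
  rintro M ⟨a₁, a₀, f, p, hp, hfp⟩
  obtain ⟨c, e₁, e₀, hf, hc⟩ := h f
  refine pdimLE_of_finite_resolution (fun i => Pr R B (c.X i))
    (fun i => (linearYoneda R B).map (c.f i)) ((linearYoneda R B).map e₀.hom ≫ p)
    (fun i => fgProj_pr _) ?_ ?_ (fun i hi => exactAt_linearYoneda_map fun x => (hc x).2 i hi)
    (monoPt_linearYoneda_map fun x => (hc x).1)
  · rw [epiPt_iff_epi] at hp ⊢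
    infer_instance
  · exact (exactAt_iff_of_iso ((linearYoneda R B).mapIso e₁).symm
      ((linearYoneda R B).mapIso e₀).symm (Iso.refl M) (by simp [hf]) (by simp)).2 hfp

end Yoneda

variable (R : Type u) [CommRing R] [IsArtinianRing R]

theorem stmt5 (A : Type u) [SmallCategory A] [Preadditive A] [CategoryTheory.Linear R A]
    (d : ℕ) (hab : IsDAbelian A d) :
    GldimLE R A (d + 1) ∧ GldimLE R Aᵒᵖ (d + 1) :=
  ⟨gldimLE_of_hasDKernels hab.a1, gldimLE_of_hasDKernels (HasDCokernels.op hab.a1op)⟩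

end DP
end
end

section
/- Let A be a dualizing R-variety with gldim A ≤ d+1 such that ⊥A_A ⊆ ⊥_d A_A. Then ⊥A_A (the subcategory of finitely presented A-modules M with Hom_A(M, P) = 0 for all finitely generated projective P) is a Serre subcategory of mod A; in particular it is closed under subobjects, quotients, and extensions. -/
set_option linter.unusedVariables false

/-!  Common setup: modules over a small R-linear category, finite presentation,
duality, dimensions, d-abelian categories, cluster tilting, etc.  -/

open CategoryTheory CategoryTheory.Limits Opposite

universe u

noncomputable section

namespace DP

variable (R : Type u) [CommRing R] [IsArtinianRing R]

universe w

/-! Closure under quotients only uses that `g` is epi, and closure under extensions that `g` is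
a cokernel of `f`. For subobjects, a map `L ⟶ P_a` extends along `f` to `M`, where it vanishes,
because `Ext¹(N, P_a) = 0`: this is where `⊥A_A ⊆ ⊥_d A_A` with `d ≥ 1` enters, applied to the
quotient `N`, which already lies in `⊥A_A`. -/

section

open CategoryTheory.Abelian

variable {C : Type*} [Category C] [Abelian C] [HasExt.{w} C] {S : ShortComplex C}

lemma _root_.CategoryTheory.ShortComplex.ShortExact.exists_f_comp_eq_of_subsingleton_ext_one
    (hS : S.ShortExact) {Y : C} [Subsingleton (Ext S.X₃ Y 1)] (h : S.X₁ ⟶ Y) :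
    ∃ u : S.X₂ ⟶ Y, S.f ≫ u = h := by
  obtain ⟨x, hx⟩ := Ext.contravariant_sequence_exact₁ hS Y (Ext.mk₀ h) (add_zero 1)
    (Subsingleton.elim _ _)
  refine ⟨Ext.homEquiv₀ x, (Ext.mk₀_bijective _ _).1 ?_⟩
  rw [← hx, ← Ext.mk₀_comp_mk₀, Ext.mk₀_homEquiv₀_apply]

end

section

variable {K : Type w} [Ring K] {J : Type w} [SmallCategory J] {L M N : J ⥤ ModuleCat.{w} K}
  {f : L ⟶ M} {g : M ⟶ N}

lemma comp_eq_zero_of_forall_exact (hfg : ∀ j, Function.Exact (f.app j) (g.app j)) :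
    f ≫ g = 0 := by
  ext j x
  exact (hfg j).apply_apply_eq_zero x

lemma shortExact_of_forall_exact (hf : ∀ j, Function.Injective (f.app j))
    (hg : ∀ j, Function.Surjective (g.app j)) (hfg : ∀ j, Function.Exact (f.app j) (g.app j)) :
    (ShortComplex.mk f g (comp_eq_zero_of_forall_exact hfg)).ShortExact := by
  have : ∀ j, Mono (f.app j) := fun j => (ModuleCat.mono_iff_injective _).2 (hf j)
  have : ∀ j, Epi (g.app j) := fun j => (ModuleCat.epi_iff_surjective _).2 (hg j)
  have : Mono f := NatTrans.mono_of_mono_app f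
  have : Epi g := NatTrans.epi_of_epi_app g
  refine ⟨?_⟩
  rw [ShortComplex.exact_iff_isZero_homology]
  refine Functor.isZero _ fun j => ?_
  set S := ShortComplex.mk f g (comp_eq_zero_of_forall_exact hfg)
  set evalj := (evaluation J (ModuleCat.{w} K)).obj j
  have hj : (S.map evalj).Exact :=
    (ShortComplex.moduleCat_exact_iff _).2 fun x hx => (hfg j x).1 hx
  exact ((ShortComplex.exact_iff_isZero_homology _).1 hj).of_iso (S.mapHomologyIso evalj).symm

end

theorem stmt7 (A : Type u) [SmallCategory A] [Preadditive A] [CategoryTheory.Linear R A]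
    [HasExt.{u} (Mdl R A)]
    (d : ℕ) (hd : 1 ≤ d)
    (hperp : ∀ M : Mdl R A, FP R A M → InPerpProj R A M → InPerpdProj R A d M) :
    ∀ (L M N : Mdl R A), FP R A L → FP R A M → FP R A N →
      ∀ (f : L ⟶ M) (g : M ⟶ N), MonoPt f → EpiPt g → ExactAt f g →
        (InPerpProj R A M → InPerpProj R A L ∧ InPerpProj R A N) ∧
        (InPerpProj R A L → InPerpProj R A N → InPerpProj R A M) := by
  intro L M N _ _ hN_fp f g hf hg hfg
  have hS := shortExact_of_forall_exact hf hg hfg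
  have : Epi g := hS.epi_g
  have quotient_mem (hM : InPerpProj R A M) : InPerpProj R A N := fun a k =>
    (cancel_epi g).1 (by rw [hM a (g ≫ k), comp_zero])
  refine ⟨fun hM => ⟨fun a k => ?subobject, quotient_mem hM⟩, fun hL hN a k => ?extension⟩
  case subobject =>
    have : Subsingleton (Abelian.Ext N (Pr R A a) 1) :=
      hperp N hN_fp (quotient_mem hM) a 1 le_rfl hd
    obtain ⟨u, rfl⟩ := hS.exists_f_comp_eq_of_subsingleton_ext_one k
    rw [hM a u, comp_zero]
  case extension =>
    obtain ⟨l, hl⟩ := CokernelCofork.IsColimit.desc' hS.gIsCokernel k (hL a (f ≫ k))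
    rw [← hl, hN a l, comp_zero]

end DP
end
end
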